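/- Let 0<s<1, let N be an integer with N>2s, let 0 < γ < (N-2s)/2, and let R > 0. Let ψ : ℝ^N → [0,∞) be continuous with support equal to the closed ball of radius R centered at the origin, with ∫∫_{ℝ^N×ℝ^N} (ψ(x)−ψ(y))² dν < ∞, and let v : ℝ^N → (0,∞) be measurable such that all integrals below are finite. Then ∫_{ℝ^N} ∫_{ℝ^N} (v(x)−v(y)) ( −ψ(x)² v(x)^{-1} + ψ(y)² v(y)^{-1} ) dν ≥ ∫_{B_R} ∫_{B_R} ψ(x) ψ(y) ( log(v(y)/ψ(y)) − log(v(x)/ψ(x)) )² dν − 3 ∫_{ℝ^N} ∫_{ℝ^N} (ψ(x)−ψ(y))² dν, where B_R is the open ball of radius R centered at the origin. -/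
import Mathlib


open MeasureTheory Real Filter

noncomputable section

/-- The singular kernel `K(x,y) = |x|^{-γ}|y|^{-γ}|x-y|^{-(N+2s)}` of the measure `dν`. -/
def nuKernel (N : ℕ) (s γ : ℝ) (x y : EuclideanSpace ℝ (Fin N)) : ℝ :=
  ‖x‖ ^ (-γ) * ‖y‖ ^ (-γ) * ‖x - y‖ ^ (-((N : ℝ) + 2 * s))


/-- For `r > 0`, `(log r)^2 ≤ r + 1/r - 2`. -/
lemma sq_log_le {r : ℝ} (hr : 0 < r) : (Real.log r) ^ 2 ≤ r + 1 / r - 2 := by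
  set t := Real.log r with ht
  have h1 : r = Real.exp t := (Real.exp_log hr).symm
  have hcosh : r + 1 / r = 2 * Real.cosh t := by
    rw [h1, Real.cosh_eq, one_div, ← Real.exp_neg]; ring
  have hid : Real.cosh t = 1 + 2 * Real.sinh (t / 2) ^ 2 := by
    have h2m := Real.cosh_two_mul (t / 2)
    have hsq := Real.cosh_sq (t / 2)
    have : 2 * (t / 2) = t := by ring
    rw [this] at h2m
    nlinarith
  have hself : |t / 2| ≤ Real.sinh |t / 2| := by
    rcases eq_or_lt_of_le (abs_nonneg (t / 2)) with h | h
    · rw [← h, Real.sinh_zero]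
    · exact (Real.self_lt_sinh_iff.mpr h).le
  have habs : Real.sinh |t / 2| = |Real.sinh (t / 2)| := (Real.abs_sinh _).symm
  have hsq2 : (t / 2) ^ 2 ≤ Real.sinh (t / 2) ^ 2 := by
    rw [← sq_abs (t / 2), ← sq_abs (Real.sinh (t / 2))]
    exact pow_le_pow_left₀ (abs_nonneg _) (hself.trans_eq habs) 2
  nlinarith

/-- Pointwise key inequality. -/
lemma key_ineq {a b : ℝ} (ha : 0 < a) (hb : 0 < b) {p q : ℝ} (hp : 0 ≤ p) (hq : 0 ≤ q) :
    p * q * (Real.log (b / q) - Real.log (a / p)) ^ 2 - 3 * (p - q) ^ 2 ≤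
      (a - b) * (-(p ^ 2) / a + q ^ 2 / b) := by
  rcases eq_or_lt_of_le hp with hp0 | hp'
  · have e : (a - b) * (-((0:ℝ) ^ 2) / a + q ^ 2 / b) = a * q ^ 2 / b - q ^ 2 := by
      field_simp; ring
    have h0 : 0 ≤ a * q ^ 2 / b := by positivity
    rw [← hp0, e]
    nlinarith [sq_nonneg q]
  rcases eq_or_lt_of_le hq with hq0 | hq'
  · have e : (a - b) * (-(p ^ 2) / a + (0:ℝ) ^ 2 / b) = p ^ 2 * b / a - p ^ 2 := by
      field_simp; ring
    have h0 : 0 ≤ p ^ 2 * b / a := by positivity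
    rw [← hq0, e]
    nlinarith [sq_nonneg p]
  · have hr : 0 < b * p / (a * q) := by positivity
    have hlog : Real.log (b / q) - Real.log (a / p) = Real.log (b * p / (a * q)) := by
      rw [Real.log_div hb.ne' hq'.ne', Real.log_div ha.ne' hp'.ne',
        Real.log_div (mul_pos hb hp').ne' (mul_pos ha hq').ne',
        Real.log_mul hb.ne' hp'.ne', Real.log_mul ha.ne' hq'.ne']
      ring
    rw [hlog]
    have h1 : (Real.log (b * p / (a * q))) ^ 2 ≤ b * p / (a * q) + 1 / (b * p / (a * q)) - 2 :=
      sq_log_le hr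
    have h2 : p * q * (Real.log (b * p / (a * q))) ^ 2 ≤
        p * q * (b * p / (a * q) + 1 / (b * p / (a * q)) - 2) :=
      mul_le_mul_of_nonneg_left h1 (by positivity)
    have e1 : p * q * (b * p / (a * q) + 1 / (b * p / (a * q)) - 2) =
        p ^ 2 * (b / a) + q ^ 2 * (a / b) - 2 * (p * q) := by
      field_simp
    have e2 : (a - b) * (-(p ^ 2) / a + q ^ 2 / b) =
        -(p ^ 2) + p ^ 2 * (b / a) + q ^ 2 * (a / b) - q ^ 2 := by
      field_simp; ring
    rw [e1] at h2
    rw [e2]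
    nlinarith [sq_nonneg (p - q)]

/-- **Logarithmic estimate** (auxiliary lemma for the weak Harnack inequality): for a
continuous cutoff `ψ ≥ 0` with support equal to the closed ball `B̄_R` and a positive function
`v` with all integrals finite,
`∫∫ (v(x)-v(y))(−ψ(x)²v(x)^{-1}+ψ(y)²v(y)^{-1}) dν
  ≥ ∫_{B_R}∫_{B_R} ψ(x)ψ(y)(log(v(y)/ψ(y))−log(v(x)/ψ(x)))² dν − 3∫∫ (ψ(x)−ψ(y))² dν`. -/
theorem log_estimate (N : ℕ) (s γ R : ℝ) (hs0 : 0 < s) (hs1 : s < 1)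
    (hN : 2 * s < (N : ℝ)) (hγ0 : 0 < γ) (hγ : γ < ((N : ℝ) - 2 * s) / 2) (hR : 0 < R)
    (ψ : EuclideanSpace ℝ (Fin N) → ℝ) (hψc : Continuous ψ) (hψ0 : ∀ x, 0 ≤ ψ x)
    (hψsupp : tsupport ψ = Metric.closedBall (0 : EuclideanSpace ℝ (Fin N)) R)
    (hψint : Integrable
      (fun p : EuclideanSpace ℝ (Fin N) × EuclideanSpace ℝ (Fin N) =>
        (ψ p.1 - ψ p.2) ^ 2 * nuKernel N s γ p.1 p.2)
      ((volume : Measure (EuclideanSpace ℝ (Fin N))).prod volume))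
    (v : EuclideanSpace ℝ (Fin N) → ℝ) (hv : ∀ x, 0 < v x)
    (hint1 : Integrable
      (fun p : EuclideanSpace ℝ (Fin N) × EuclideanSpace ℝ (Fin N) =>
        (v p.1 - v p.2) * (-(ψ p.1 ^ 2) / v p.1 + ψ p.2 ^ 2 / v p.2) * nuKernel N s γ p.1 p.2)
      ((volume : Measure (EuclideanSpace ℝ (Fin N))).prod volume))
    (hint2 : Integrable
      (fun p : EuclideanSpace ℝ (Fin N) × EuclideanSpace ℝ (Fin N) =>
        ψ p.1 * ψ p.2 * (Real.log (v p.2 / ψ p.2) - Real.log (v p.1 / ψ p.1)) ^ 2 *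
          nuKernel N s γ p.1 p.2)
      ((volume.restrict (Metric.ball (0 : EuclideanSpace ℝ (Fin N)) R)).prod
        (volume.restrict (Metric.ball (0 : EuclideanSpace ℝ (Fin N)) R)))) :
    (∫ x : EuclideanSpace ℝ (Fin N), ∫ y : EuclideanSpace ℝ (Fin N),
        (v x - v y) * (-(ψ x ^ 2) / v x + ψ y ^ 2 / v y) * nuKernel N s γ x y) ≥
      (∫ x in Metric.ball (0 : EuclideanSpace ℝ (Fin N)) R,
          ∫ y in Metric.ball (0 : EuclideanSpace ℝ (Fin N)) R,
            ψ x * ψ y * (Real.log (v y / ψ y) - Real.log (v x / ψ x)) ^ 2 *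
              nuKernel N s γ x y) -
        3 * ∫ x : EuclideanSpace ℝ (Fin N), ∫ y : EuclideanSpace ℝ (Fin N),
              (ψ x - ψ y) ^ 2 * nuKernel N s γ x y := by
  have hK : ∀ x y : EuclideanSpace ℝ (Fin N), 0 ≤ nuKernel N s γ x y := by
    intro x y
    unfold nuKernel
    positivity
  have eF : (∫ x : EuclideanSpace ℝ (Fin N), ∫ y : EuclideanSpace ℝ (Fin N),
      (v x - v y) * (-(ψ x ^ 2) / v x + ψ y ^ 2 / v y) * nuKernel N s γ x y) =
      ∫ p : EuclideanSpace ℝ (Fin N) × EuclideanSpace ℝ (Fin N),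
        (v p.1 - v p.2) * (-(ψ p.1 ^ 2) / v p.1 + ψ p.2 ^ 2 / v p.2) * nuKernel N s γ p.1 p.2
        ∂((volume : Measure (EuclideanSpace ℝ (Fin N))).prod volume) :=
    MeasureTheory.integral_integral hint1
  have eH : (∫ x : EuclideanSpace ℝ (Fin N), ∫ y : EuclideanSpace ℝ (Fin N),
      (ψ x - ψ y) ^ 2 * nuKernel N s γ x y) =
      ∫ p : EuclideanSpace ℝ (Fin N) × EuclideanSpace ℝ (Fin N),
        (ψ p.1 - ψ p.2) ^ 2 * nuKernel N s γ p.1 p.2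
        ∂((volume : Measure (EuclideanSpace ℝ (Fin N))).prod volume) :=
    MeasureTheory.integral_integral hψint
  have eG : (∫ x in Metric.ball (0 : EuclideanSpace ℝ (Fin N)) R,
        ∫ y in Metric.ball (0 : EuclideanSpace ℝ (Fin N)) R,
          ψ x * ψ y * (Real.log (v y / ψ y) - Real.log (v x / ψ x)) ^ 2 *
            nuKernel N s γ x y) =
      ∫ p : EuclideanSpace ℝ (Fin N) × EuclideanSpace ℝ (Fin N),
        ψ p.1 * ψ p.2 * (Real.log (v p.2 / ψ p.2) - Real.log (v p.1 / ψ p.1)) ^ 2 *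
          nuKernel N s γ p.1 p.2
        ∂((volume.restrict (Metric.ball (0 : EuclideanSpace ℝ (Fin N)) R)).prod
          (volume.restrict (Metric.ball (0 : EuclideanSpace ℝ (Fin N)) R))) :=
    MeasureTheory.integral_integral hint2
  rw [ge_iff_le, eF, eH, eG, Measure.prod_restrict]
  set B := Metric.ball (0 : EuclideanSpace ℝ (Fin N)) R with hBdef
  set Pm := (volume : Measure (EuclideanSpace ℝ (Fin N))).prod (volume : Measure (EuclideanSpace ℝ (Fin N))) with hPmdef
  set F := fun p : EuclideanSpace ℝ (Fin N) × EuclideanSpace ℝ (Fin N) =>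
    (v p.1 - v p.2) * (-(ψ p.1 ^ 2) / v p.1 + ψ p.2 ^ 2 / v p.2) * nuKernel N s γ p.1 p.2
    with hFdef
  set G := fun p : EuclideanSpace ℝ (Fin N) × EuclideanSpace ℝ (Fin N) =>
    ψ p.1 * ψ p.2 * (Real.log (v p.2 / ψ p.2) - Real.log (v p.1 / ψ p.1)) ^ 2 *
      nuKernel N s γ p.1 p.2 with hGdef
  set H := fun p : EuclideanSpace ℝ (Fin N) × EuclideanSpace ℝ (Fin N) =>
    (ψ p.1 - ψ p.2) ^ 2 * nuKernel N s γ p.1 p.2 with hHdef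
  have hGle : ∀ p : EuclideanSpace ℝ (Fin N) × EuclideanSpace ℝ (Fin N),
      G p ≤ F p + 3 * H p := by
    intro p
    have hkey := key_ineq (hv p.1) (hv p.2) (hψ0 p.1) (hψ0 p.2)
    have h := mul_le_mul_of_nonneg_right hkey (hK p.1 p.2)
    simp only [hFdef, hGdef, hHdef]
    nlinarith [h]
  have hG0 : ∀ p : EuclideanSpace ℝ (Fin N) × EuclideanSpace ℝ (Fin N), 0 ≤ G p := by
    intro p
    exact mul_nonneg (mul_nonneg (mul_nonneg (hψ0 p.1) (hψ0 p.2)) (sq_nonneg _)) (hK p.1 p.2)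
  have hH3 : Integrable (fun p => 3 * H p) Pm := hψint.const_mul 3
  have hFH : Integrable (fun p => F p + 3 * H p) Pm := hint1.add hH3
  have hGint : IntegrableOn G (B ×ˢ B) Pm := by
    rw [IntegrableOn, hPmdef, ← Measure.prod_restrict]
    exact hint2
  have h1 : ∫ p in B ×ˢ B, G p ∂Pm ≤ ∫ p in B ×ˢ B, (F p + 3 * H p) ∂Pm :=
    setIntegral_mono_on hGint (hFH.integrableOn)
      (measurableSet_ball.prod measurableSet_ball) (fun p _ => hGle p)
  have h2 : ∫ p in B ×ˢ B, (F p + 3 * H p) ∂Pm ≤ ∫ p, (F p + 3 * H p) ∂Pm :=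
    setIntegral_le_integral hFH
      (Filter.Eventually.of_forall fun p => (hG0 p).trans (hGle p))
  have h3 : ∫ p, (F p + 3 * H p) ∂Pm = (∫ p, F p ∂Pm) + 3 * ∫ p, H p ∂Pm := by
    rw [integral_add hint1 hH3, integral_const_mul]
  linarith


end
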